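/- Let X, Y be strings of length n with τ ≥ 1 an integer, and for each level p ∈ [0, ⌈log₂ n⌉] let X_{p,i}, Y_{p,i} be the length-2^p blocks of X and Y and B_p = {i : ED(X_{p,i}, Y_{p,i}) > τ}. Then for every level p, the sum over i ∈ B_p of ED(X_{p,i}, Y_{p,i}) is at most 2τ times the sum of |B_q| over q from ⌈log₂ τ⌉ to p. -/

import Mathlib

/-- Cost structure for edit distance (formerly in Mathlib's `Mathlib.Data.List.EditDistance.Defs`). -/
structure Levenshtein.Cost (α β δ : Type*) where
  delete : α → δ
  insert : β → δ
  substitute : α → β → δ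

/-- Unit costs (formerly `Levenshtein.defaultCost` in Mathlib). -/
def Levenshtein.defaultCost {α : Type*} [DecidableEq α] : Levenshtein.Cost α α ℕ where
  delete _ := 1
  insert _ := 1
  substitute a b := if a = b then 0 else 1

/-- Levenshtein distance (formerly in Mathlib), via its defining recursion. -/
def levenshtein {α β δ : Type*} [AddZeroClass δ] [Min δ] (C : Levenshtein.Cost α β δ) :
    List α → List β → δ
  | [], [] => 0
  | [], y :: ys => C.insert y + levenshtein C [] ys
  | x :: xs, [] => C.delete x + levenshtein C xs []
  | x :: xs, y :: ys =>
      min (C.delete x + levenshtein C xs (y :: ys))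
        (min (C.insert y + levenshtein C (x :: xs) ys) (C.substitute x y + levenshtein C xs ys))

/-- The edit distance between two lists (Levenshtein distance with unit costs). -/
def ED {α : Type*} [DecidableEq α] (X Y : List α) : ℕ :=
  levenshtein Levenshtein.defaultCost X Y

/-- The i-th block of length 2^p of a string: X[i·2^p .. min(n,(i+1)·2^p)). -/
def blk {α : Type*} (X : List α) (p i : ℕ) : List α := (X.drop (i * 2 ^ p)).take (2 ^ p)

/-- The number of blocks at level p: m_p = ⌈n / 2^p⌉. -/
def nblocks (n p : ℕ) : ℕ := (n + 2 ^ p - 1) / 2 ^ p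

/-- The set B_p of indices of block pairs with edit distance exceeding τ. -/
def Bset {α : Type*} [DecidableEq α] (X Y : List α) (n τ p : ℕ) : Finset ℕ :=
  (Finset.range (nblocks n p)).filter fun i => τ < ED (blk X p i) (blk Y p i)

/-!
Splitting a level-`(p+1)` block into its two level-`p` halves and aligning the halves separately
bounds its edit distance by the sum of those of its two children. A child outside `B_p` costs at
most `τ` (children past the end of the strings are empty), so the total cost of `B_(p+1)` is at
most that of `B_p` plus `2τ|B_(p+1)|`. Induction starts at `p₀ = ⌈log₂ τ⌉`, where every block has
cost at most `2^p₀ ≤ 2τ`; below `p₀` no block is long enough to cost more than `τ`.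
-/
open Finset

section EditDistance

variable {α : Type*} [DecidableEq α]

@[simp] lemma ED_nil_left (Y : List α) : ED [] Y = Y.length := by
  induction Y with
  | nil => simp [ED, levenshtein]
  | cons y ys ih => simp_all [ED, levenshtein, Levenshtein.defaultCost, add_comm]

@[simp] lemma ED_nil_right (X : List α) : ED X [] = X.length := by
  induction X with
  | nil => simp [ED, levenshtein]
  | cons x xs ih => simp_all [ED, levenshtein, Levenshtein.defaultCost, add_comm]

lemma ED_cons_cons (x y : α) (xs ys : List α) :
    ED (x :: xs) (y :: ys) =
      min (1 + ED xs (y :: ys)) (min (1 + ED (x :: xs) ys) ((if x = y then 0 else 1) + ED xs ys)) := by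
  rw [ED, levenshtein]; rfl

lemma ED_le_max_length (X Y : List α) : ED X Y ≤ max X.length Y.length := by
  induction X generalizing Y with
  | nil => simp
  | cons x xs ih =>
    cases Y with
    | nil => simp
    | cons y ys =>
      have := ih ys
      rw [ED_cons_cons]
      split_ifs <;> simp only [List.length_cons] <;> omega

lemma ED_append_left_le (B C D : List α) : ED B (C ++ D) ≤ C.length + ED B D := by
  induction C with
  | nil => simp
  | cons c C ih =>
    have : ED B (c :: (C ++ D)) ≤ 1 + ED B (C ++ D) := by
      cases B with
      | nil => simp
      | cons b B => rw [ED_cons_cons]; omega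
    simp only [List.cons_append, List.length_cons]
    omega

lemma ED_append_right_le (A B D : List α) : ED (A ++ B) D ≤ A.length + ED B D := by
  induction A with
  | nil => simp
  | cons a A ih =>
    have : ED (a :: (A ++ B)) D ≤ 1 + ED (A ++ B) D := by
      cases D with
      | nil => simp
      | cons d D => rw [ED_cons_cons]; omega
    simp only [List.cons_append, List.length_cons]
    omega

-- An alignment of `A` with `C` followed by one of `B` with `D` aligns the concatenations.
theorem ED_append_le : ∀ A C B D : List α, ED (A ++ B) (C ++ D) ≤ ED A C + ED B D
  | [], C, B, D => by simpa using ED_append_left_le B C D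
  | A, [], B, D => by simpa using ED_append_right_le A B D
  | a :: A, c :: C, B, D => by
    have hd := ED_append_le A (c :: C) B D
    have hi := ED_append_le (a :: A) C B D
    have hs := ED_append_le A C B D
    simp only [List.cons_append] at hd hi ⊢
    rw [ED_cons_cons, ED_cons_cons]
    omega
  termination_by A C => A.length + C.length

end EditDistance

lemma Finset.sum_le_sum_add_mul_card {ι : Type*} [DecidableEq ι] (T B : Finset ι) {f : ι → ℕ}
    {c : ℕ} (hf : ∀ j ∉ B, f j ≤ c) : ∑ j ∈ T, f j ≤ ∑ j ∈ B, f j + c * #T := by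
  rw [← sum_filter_add_sum_filter_not T (fun j => j ∈ B) f]
  gcongr
  · exact fun j hj => (mem_filter.1 hj).2
  · calc ∑ j ∈ T with j ∉ B, f j ≤ #(T.filter fun j => j ∉ B) * c :=
          sum_le_card_nsmul _ _ _ fun j hj => hf j (mem_filter.1 hj).2
      _ ≤ c * #T := by rw [mul_comm]; gcongr; exact filter_subset _ _

lemma Finset.sum_two_mul_add_le (S B : Finset ℕ) {f : ℕ → ℕ} {c : ℕ} (hf : ∀ j ∉ B, f j ≤ c) :
    ∑ i ∈ S, (f (2 * i) + f (2 * i + 1)) ≤ ∑ j ∈ B, f j + 2 * c * #S := by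
  have hdisj : Disjoint (S.image (2 * ·)) (S.image (2 * · + 1)) := by
    simp only [disjoint_left, mem_image]
    rintro _ ⟨i, -, rfl⟩ ⟨k, -, h⟩
    omega
  have heven : Set.InjOn (2 * ·) S := fun _ _ _ _ h => by simpa using h
  have hodd : Set.InjOn (2 * · + 1) S := fun _ _ _ _ h => by simpa using h
  have hsum : ∑ i ∈ S, (f (2 * i) + f (2 * i + 1)) =
      ∑ j ∈ S.image (2 * ·) ∪ S.image (2 * · + 1), f j := by
    rw [sum_union hdisj, sum_image heven, sum_image hodd, sum_add_distrib]
  have hcard : #(S.image (2 * ·) ∪ S.image (2 * · + 1)) = 2 * #S := by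
    rw [card_union_of_disjoint hdisj, card_image_of_injOn heven, card_image_of_injOn hodd, two_mul]
  rw [hsum, mul_comm 2 c, mul_assoc, ← hcard]
  exact sum_le_sum_add_mul_card _ B hf

lemma Nat.two_pow_clog_le {τ : ℕ} (hτ : 1 ≤ τ) : 2 ^ Nat.clog 2 τ ≤ 2 * τ := by
  rcases hτ.eq_or_lt with rfl | hτ
  · simp
  · calc 2 ^ Nat.clog 2 τ = 2 ^ (Nat.clog 2 τ - 1 + 1) := by
          rw [Nat.sub_one_add_one (Nat.clog_pos one_lt_two hτ).ne']
      _ = 2 * 2 ^ (Nat.clog 2 τ - 1) := Nat.pow_succ'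
      _ ≤ 2 * τ := by gcongr; exact (Nat.pow_pred_clog_lt_self one_lt_two hτ).le

section Blocks

variable {α : Type*}

lemma blk_succ (X : List α) (p i : ℕ) :
    blk X (p + 1) i = blk X p (2 * i) ++ blk X p (2 * i + 1) := by
  rw [blk, blk, blk, pow_succ, mul_two, List.take_add, List.drop_drop]
  congr 3 <;> ring

lemma length_blk_le (X : List α) (p i : ℕ) : (blk X p i).length ≤ 2 ^ p :=
  List.length_take_le _ _

lemma blk_eq_nil_of_nblocks_le {n p i : ℕ} (X : List α) (hX : X.length ≤ n)
    (hi : nblocks n p ≤ i) : blk X p i = [] := by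
  have hp : 0 < 2 ^ p := Nat.two_pow_pos p
  have hn : n ≤ i * 2 ^ p := by
    by_contra! h
    have : i + 1 ≤ nblocks n p := by
      rw [nblocks, Nat.le_div_iff_mul_le hp, add_mul, one_mul]
      omega
    omega
  rw [blk, List.drop_eq_nil_of_le (by omega), List.take_nil]

variable [DecidableEq α]

lemma ED_blk_le (X Y : List α) (p i : ℕ) : ED (blk X p i) (blk Y p i) ≤ 2 ^ p :=
  (ED_le_max_length _ _).trans (max_le (length_blk_le X p i) (length_blk_le Y p i))

lemma ED_blk_le_of_notMem_Bset {n τ p i : ℕ} {X Y : List α} (hX : X.length ≤ n)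
    (hY : Y.length ≤ n) (hi : i ∉ Bset X Y n τ p) : ED (blk X p i) (blk Y p i) ≤ τ := by
  by_cases hn : i < nblocks n p
  · simpa [Bset, hn] using hi
  · rw [blk_eq_nil_of_nblocks_le X hX (not_lt.1 hn), blk_eq_nil_of_nblocks_le Y hY (not_lt.1 hn)]
    simp

lemma Bset_eq_empty_of_lt_clog (X Y : List α) (n : ℕ) {τ p : ℕ} (hp : p < Nat.clog 2 τ) :
    Bset X Y n τ p = ∅ := by
  have := (Nat.lt_clog_iff_pow_lt one_lt_two).1 hp
  refine filter_false_of_mem fun i _ => ?_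
  have := ED_blk_le X Y p i
  omega

end Blocks

lemma sum_ED_Bset_succ_le {α : Type*} [DecidableEq α] {n τ p : ℕ} {X Y : List α}
    (hX : X.length ≤ n) (hY : Y.length ≤ n) :
    ∑ i ∈ Bset X Y n τ (p + 1), ED (blk X (p + 1) i) (blk Y (p + 1) i) ≤
      ∑ j ∈ Bset X Y n τ p, ED (blk X p j) (blk Y p j) + 2 * τ * #(Bset X Y n τ (p + 1)) :=
  calc _ ≤ ∑ i ∈ Bset X Y n τ (p + 1), (ED (blk X p (2 * i)) (blk Y p (2 * i)) +
          ED (blk X p (2 * i + 1)) (blk Y p (2 * i + 1))) :=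
        sum_le_sum fun i _ => by rw [blk_succ, blk_succ]; exact ED_append_le _ _ _ _
    _ ≤ _ := sum_two_mul_add_le _ _ fun _ hj => ED_blk_le_of_notMem_Bset hX hY hj

/-- For every level p, the total edit distance of the high-cost blocks at level p
is at most 2τ times the total number of high-cost blocks at levels ⌈log₂ τ⌉,…,p. -/
theorem stmt_4 {α : Type*} [DecidableEq α] (n τ : ℕ) (X Y : List α)
    (hX : X.length = n) (hY : Y.length = n) (hτ : 1 ≤ τ) (p : ℕ) :
    ∑ i ∈ Bset X Y n τ p, ED (blk X p i) (blk Y p i) ≤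
      2 * τ * ∑ q ∈ Finset.Icc (Nat.clog 2 τ) p, (Bset X Y n τ q).card := by
  rcases lt_or_ge p (Nat.clog 2 τ) with hp | hp
  · simp [Bset_eq_empty_of_lt_clog X Y n hp]
  induction p, hp using Nat.le_induction with
  | base =>
    rw [Icc_self, sum_singleton, mul_comm]
    exact sum_le_card_nsmul _ _ _ fun i _ => (ED_blk_le X Y _ i).trans (Nat.two_pow_clog_le hτ)
  | succ p hp ih =>
    rw [sum_Icc_succ_top (by omega), mul_add]
    exact (sum_ED_Bset_succ_le hX.le hY.le).trans (by omega)
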